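/- arXiv:1508.06874 — 5 statements merged into one kernel-verified Lean document; each statement's English description precedes it below -/
import Mathlib

section
/- Let G be a graph, S a set of vertices, w a vertex, and k a natural number. If the infection time of w from S is at least k, then for any vertex z at distance at least k from w, the infection time of w from S ∪ {z} is still at least k. -/
open Set

variable {V : Type*}

/-- One step of 2-neighbor bootstrap percolation. -/
def percStep (G : SimpleGraph V) (A : Set V) : Set V :=
  A ∪ {v | ∃ x y, x ≠ y ∧ G.Adj v x ∧ G.Adj v y ∧ x ∈ A ∧ y ∈ A}

/-- The infected set after `n` rounds starting from `S`. -/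
def perc (G : SimpleGraph V) (S : Set V) : ℕ → Set V
  | 0 => S
  | n + 1 => percStep G (perc G S n)

/-- Infection time of a vertex, `∞` if never infected. -/
noncomputable def infTime (G : SimpleGraph V) (S : Set V) (u : V) : ℕ∞ :=
  sInf {n : ℕ∞ | ∃ i : ℕ, n = (i : ℕ∞) ∧ u ∈ perc G S i}

/-- `S` is a hull (percolating) set. -/
def IsHullSet (G : SimpleGraph V) (S : Set V) : Prop :=
  ∃ t, perc G S t = Set.univ

/-- Percolation time of a hull set. -/
noncomputable def percTime (G : SimpleGraph V) (S : Set V) : ℕ :=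
  sInf {t | perc G S t = Set.univ}

lemma perc_subset_perc_union_ball (G : SimpleGraph V) (S : Set V) (z : V) :
    ∀ i : ℕ, perc G (S ∪ {z}) i ⊆ perc G S i ∪ {v | G.edist z v ≤ (i : ℕ∞)}
  | 0 => by
    intro v hv
    rcases hv with hv | hv
    · exact Or.inl hv
    · refine Or.inr ?_
      simp only [Set.mem_singleton_iff] at hv
      subst hv
      simp [SimpleGraph.edist_self]
  | i + 1 => by
    intro v hv
    rcases hv with hv | ⟨x, y, hxy, hvx, hvy, hx, hy⟩
    · rcases perc_subset_perc_union_ball G S z i hv with h | h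
      · exact Or.inl (Or.inl h)
      · refine Or.inr ?_
        calc G.edist z v ≤ (i : ℕ∞) := h
          _ ≤ ((i + 1 : ℕ) : ℕ∞) := by exact_mod_cast Nat.le_succ i
    · rcases perc_subset_perc_union_ball G S z i hx with hx' | hx'
      · rcases perc_subset_perc_union_ball G S z i hy with hy' | hy'
        · exact Or.inl (Or.inr ⟨x, y, hxy, hvx, hvy, hx', hy'⟩)
        · refine Or.inr ?_
          calc G.edist z v ≤ G.edist z y + G.edist y v := SimpleGraph.edist_triangle
            _ ≤ (i : ℕ∞) + 1 := by
                refine add_le_add hy' ?_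
                have := G.edist_le (SimpleGraph.Walk.cons hvy.symm SimpleGraph.Walk.nil)
                simpa using this
            _ = ((i + 1 : ℕ) : ℕ∞) := by push_cast; ring
      · refine Or.inr ?_
        calc G.edist z v ≤ G.edist z x + G.edist x v := SimpleGraph.edist_triangle
          _ ≤ (i : ℕ∞) + 1 := by
              refine add_le_add hx' ?_
              have := G.edist_le (SimpleGraph.Walk.cons hvx.symm SimpleGraph.Walk.nil)
              simpa using this
          _ = ((i + 1 : ℕ) : ℕ∞) := by push_cast; ring

theorem infTime_ge_of_far_vertex (G : SimpleGraph V) (S : Set V) (w : V) (k : ℕ)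
    (hw : (k : ℕ∞) ≤ infTime G S w) (z : V) (hz : (k : ℕ∞) ≤ G.edist w z) :
    (k : ℕ∞) ≤ infTime G (S ∪ {z}) w := by
  refine le_sInf ?_
  rintro n ⟨i, rfl, hi⟩
  by_contra hlt
  push_neg at hlt
  have hik : i < k := by exact_mod_cast hlt
  rcases perc_subset_perc_union_ball G S z i hi with h | h
  · have : infTime G S w ≤ (i : ℕ∞) := sInf_le ⟨i, rfl, h⟩
    have : (k : ℕ∞) ≤ (i : ℕ∞) := hw.trans this
    exact absurd (by exact_mod_cast this) (Nat.not_le.mpr hik)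
  · have : (k : ℕ∞) ≤ (i : ℕ∞) := by
      calc (k : ℕ∞) ≤ G.edist w z := hz
        _ = G.edist z w := SimpleGraph.edist_comm
        _ ≤ (i : ℕ∞) := h
    exact absurd (by exact_mod_cast this) (Nat.not_le.mpr hik)
end

section
/- Let G be a graph, S a set of vertices, w a vertex, and k a natural number. If the infection time of w from S is at least k, then the infection time of w from S ∪ N_{≥k}(w) is still at least k, where N_{≥k}(w) is the set of vertices at graph distance at least k from w. -/
open Set

variable {V : Type*}

/-! Whether a vertex `v` is infected by round `i` depends only on the initial set within distance
`i` of `v`; for `i < k` the ball of radius `i` around `w` contains no vertex at distance `≥ k`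
from `w`, so adding those vertices does not speed up the infection of `w`. -/

theorem le_infTime_iff {G : SimpleGraph V} {S : Set V} {w : V} {k : ℕ} :
    (k : ℕ∞) ≤ infTime G S w ↔ ∀ i < k, w ∉ perc G S i := by
  simp only [infTime, le_sInf_iff, mem_ofPred_eq, forall_exists_index, and_imp]
  constructor
  · intro h i hik hi
    exact absurd (h i i rfl hi) (by exact_mod_cast hik.not_ge)
  · rintro h _ i rfl hi
    by_contra hlt
    exact h i (by exact_mod_cast not_le.1 hlt) hi

theorem mem_perc_of_mem_perc_of_ball {G : SimpleGraph V} {S T : Set V} (i : ℕ) {v : V}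
    (hv : v ∈ perc G T i) (hTS : ∀ u ∈ T, G.edist v u ≤ i → u ∈ S) : v ∈ perc G S i := by
  induction i generalizing v with
  | zero => exact hTS v hv (by simp)
  | succ n ih =>
    have hball : ∀ u, G.edist v u ≤ 1 → ∀ x ∈ T, G.edist u x ≤ n → x ∈ S := by
      intro u hvu x hx hux
      refine hTS x hx ?_
      calc G.edist v x ≤ G.edist v u + G.edist u x := G.edist_triangle
        _ ≤ 1 + n := add_le_add hvu hux
        _ = (n + 1 : ℕ) := by push_cast; rw [add_comm]
    rcases hv with hv | ⟨x, y, hxy, hvx, hvy, hx, hy⟩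
    · exact Or.inl (ih hv (hball v (by simp)))
    · exact Or.inr ⟨x, y, hxy, hvx, hvy,
        ih hx (hball x (SimpleGraph.edist_eq_one_iff_adj.2 hvx).le),
        ih hy (hball y (SimpleGraph.edist_eq_one_iff_adj.2 hvy).le)⟩

theorem infTime_ge_of_far_set (G : SimpleGraph V) (S : Set V) (w : V) (k : ℕ)
    (hw : (k : ℕ∞) ≤ infTime G S w) :
    (k : ℕ∞) ≤ infTime G (S ∪ {z | (k : ℕ∞) ≤ G.edist w z}) w := by
  rw [le_infTime_iff] at hw ⊢
  intro i hik hi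
  refine hw i hik (mem_perc_of_mem_perc_of_ball i hi ?_)
  rintro u (hu | hfar) hwu
  · exact hu
  · exact absurd (hwu.trans_lt (by exact_mod_cast hik)) (not_lt.2 hfar)
end

section
/- If x and y are adjacent vertices of a graph G both of degree 2, then every hull set (percolating set) of G under 2-neighbor bootstrap percolation contains at least one of x and y. -/
open Set

variable {V : Type*}

/-- If a vertex has degree 2 and `y` is one of its neighbors, then among any two
distinct neighbors, one must be `y`. -/
lemma neighbor_mem_of_degree_two (G : SimpleGraph V) [Fintype V] [DecidableRel G.Adj]
    {x y a b : V} (hx : G.degree x = 2) (hxy : G.Adj x y) (hab : a ≠ b)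
    (ha : G.Adj x a) (hb : G.Adj x b) : a = y ∨ b = y := by
  classical
  by_contra h
  push_neg at h
  obtain ⟨hay, hby⟩ := h
  have hsub : ({a, b, y} : Finset V) ⊆ G.neighborFinset x := by
    intro v hv
    simp only [Finset.mem_insert, Finset.mem_singleton] at hv
    rcases hv with rfl | rfl | rfl <;> simp [SimpleGraph.mem_neighborFinset, ha, hb, hxy]
  have hcard : ({a, b, y} : Finset V).card = 3 := by
    rw [Finset.card_insert_of_notMem (by simp [hab, hay]),
        Finset.card_insert_of_notMem (by simp [hby])]
    simp
  have := Finset.card_le_card hsub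
  rw [hcard, SimpleGraph.card_neighborFinset_eq_degree, hx] at this
  omega

theorem hull_contains_adjacent_degree_two (G : SimpleGraph V) [Fintype V] [DecidableRel G.Adj]
    (S : Set V) (hS : IsHullSet G S) (x y : V) (hxy : G.Adj x y)
    (hx : G.degree x = 2) (hy : G.degree y = 2) :
    x ∈ S ∨ y ∈ S := by
  by_contra h
  push_neg at h
  obtain ⟨hxS, hyS⟩ := h
  have key : ∀ n, x ∉ perc G S n ∧ y ∉ perc G S n := by
    intro n
    induction n with
    | zero => exact ⟨hxS, hyS⟩
    | succ n ih =>
      obtain ⟨ihx, ihy⟩ := ih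
      constructor
      · rintro (hmem | ⟨a, b, hab, ha, hb, haA, hbA⟩)
        · exact ihx hmem
        · rcases neighbor_mem_of_degree_two G hx hxy hab ha hb with rfl | rfl
          · exact ihy haA
          · exact ihy hbA
      · rintro (hmem | ⟨a, b, hab, ha, hb, haA, hbA⟩)
        · exact ihy hmem
        · rcases neighbor_mem_of_degree_two G hy hxy.symm hab ha hb with rfl | rfl
          · exact ihx haA
          · exact ihx hbA
  obtain ⟨t, ht⟩ := hS
  exact (key t).1 (ht ▸ Set.mem_univ x)
end

section
/- Let G be a graph, H an initial set, and v a vertex infected at time t ≥ 1 from H under 2-neighbor bootstrap percolation, such that v has a neighbor in H. Then there exists a subset C ⊆ H with |C| ≤ 2^{t−1} + 1 such that v is infected from C within time t. -/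
open Set

variable {V : Type*}

lemma perc_mono_set (G : SimpleGraph V) {S T : Set V} (hST : S ⊆ T) :
    ∀ n, perc G S n ⊆ perc G T n := by
  intro n
  induction n with
  | zero => exact hST
  | succ n ih =>
    rintro u (h | ⟨x, y, hxy, hax, hay, hx, hy⟩)
    · exact Or.inl (ih h)
    · exact Or.inr ⟨x, y, hxy, hax, hay, ih hx, ih hy⟩

lemma perc_subset_perc (G : SimpleGraph V) (S : Set V) : ∀ n, S ⊆ perc G S n := by
  intro n
  induction n with
  | zero => exact subset_rfl
  | succ n ih => exact fun u hu => Or.inl (ih hu)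

lemma perc_small (G : SimpleGraph V) (H : Set V) (v : V) :
    ∀ n, v ∈ perc G H n →
      ∃ C ⊆ H, C.Finite ∧ C.ncard ≤ 2 ^ n ∧ v ∈ perc G C n := by
  intro n
  induction n generalizing v with
  | zero =>
    intro hv
    exact ⟨{v}, Set.singleton_subset_iff.mpr hv, Set.finite_singleton v, by simp, rfl⟩
  | succ n ih =>
    rintro (h | ⟨x, y, hxy, hax, hay, hx, hy⟩)
    · obtain ⟨C, hCH, hfin, hcard, hvC⟩ := ih v h
      exact ⟨C, hCH, hfin, le_trans hcard (Nat.pow_le_pow_right (by norm_num) (Nat.le_succ n)),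
        Or.inl hvC⟩
    · obtain ⟨C₁, hC₁H, hfin₁, hcard₁, hxC₁⟩ := ih x hx
      obtain ⟨C₂, hC₂H, hfin₂, hcard₂, hyC₂⟩ := ih y hy
      refine ⟨C₁ ∪ C₂, Set.union_subset hC₁H hC₂H, hfin₁.union hfin₂, ?_, ?_⟩
      · calc (C₁ ∪ C₂).ncard ≤ C₁.ncard + C₂.ncard := Set.ncard_union_le _ _
          _ ≤ 2 ^ n + 2 ^ n := Nat.add_le_add hcard₁ hcard₂
          _ = 2 ^ (n + 1) := by ring
      · exact Or.inr ⟨x, y, hxy, hax, hay,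
          perc_mono_set G Set.subset_union_left n hxC₁,
          perc_mono_set G Set.subset_union_right n hyC₂⟩

theorem exists_small_infecting_set_of_neighbor (G : SimpleGraph V) (H : Set V) (v : V) (t : ℕ)
    (ht : 1 ≤ t) (hv : v ∈ perc G H t) (hv' : v ∉ perc G H (t - 1))
    (hnb : ∃ x, G.Adj v x ∧ x ∈ H) :
    ∃ C ⊆ H, C.Finite ∧ C.ncard ≤ 2 ^ (t - 1) + 1 ∧ v ∈ perc G C t := by
  obtain ⟨s, rfl⟩ : ∃ s, t = s + 1 := ⟨t - 1, (Nat.succ_pred_eq_of_pos ht).symm⟩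
  simp only [Nat.add_sub_cancel] at hv' ⊢
  obtain ⟨w, hw, hwH⟩ := hnb
  rcases hv with h | ⟨x, y, hxy, hax, hay, hx, hy⟩
  · exact absurd h hv'
  -- pick a witness distinct from w
  have key : ∃ z, z ≠ w ∧ G.Adj v z ∧ z ∈ perc G H s := by
    by_cases hxw : x = w
    · exact ⟨y, fun h => hxy (hxw.trans h.symm), hay, hy⟩
    · exact ⟨x, hxw, hax, hx⟩
  obtain ⟨z, hzw, haz, hz⟩ := key
  obtain ⟨C₀, hC₀H, hC₀fin, hC₀card, hzC₀⟩ := perc_small G H z s hz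
  refine ⟨insert w C₀, insert_subset hwH hC₀H, hC₀fin.insert w,
    le_trans (Set.ncard_insert_le _ _) (by omega), ?_⟩
  refine Or.inr ⟨z, w, hzw, haz, hw, ?_, ?_⟩
  · exact perc_mono_set G (Set.subset_insert w C₀) s hzC₀
  · exact perc_subset_perc G _ s (Set.mem_insert w C₀)
end

section
/- Let G be a graph, v a cut vertex, and H a connected component of G − v with V(H) ⊆ N(v). Then every hull set (percolating set) of G under 2-neighbor bootstrap percolation contains at least one vertex of H. -/
open Set

variable {V : Type*}

theorem hull_meets_component_in_neighborhood (G : SimpleGraph V) (v : V)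
    (hconn : G.Connected) (hcut : ¬ (G.induce ({v}ᶜ : Set V)).Connected)
    (c : (G.induce ({v}ᶜ : Set V)).ConnectedComponent)
    (C : Set V) (hC : C = Subtype.val '' c.supp)
    (hCN : C ⊆ G.neighborSet v)
    (S : Set V) (hS : IsHullSet G S) :
    (S ∩ C).Nonempty := by
  by_contra hne
  rw [Set.not_nonempty_iff_eq_empty] at hne
  -- any neighbor of a vertex of C is v or in C
  have hnbr : ∀ u ∈ C, ∀ x, G.Adj u x → x = v ∨ x ∈ C := by
    intro u hu x hadj
    by_cases hxv : x = v
    · exact Or.inl hxv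
    · right
      rw [hC] at hu ⊢
      obtain ⟨u', hu', rfl⟩ := hu
      have hx : x ∈ ({v}ᶜ : Set V) := by simpa using hxv
      have hadj' : (G.induce ({v}ᶜ : Set V)).Adj u' ⟨x, hx⟩ := by
        simpa using hadj
      have hu'c : (G.induce ({v}ᶜ : Set V)).connectedComponentMk u' = c := hu'
      have : (G.induce ({v}ᶜ : Set V)).connectedComponentMk ⟨x, hx⟩ = c := by
        rw [← hu'c]
        exact SimpleGraph.ConnectedComponent.sound hadj'.symm.reachable
      exact ⟨⟨x, hx⟩, this, rfl⟩
  have key : ∀ n, ∀ u ∈ C, u ∉ perc G S n := by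
    intro n
    induction n with
    | zero =>
      intro u hu huS
      have : u ∈ S ∩ C := ⟨huS, hu⟩
      rw [hne] at this
      exact this
    | succ n ih =>
      intro u hu hup
      rcases hup with h | ⟨x, y, hxy, hax, hay, hxA, hyA⟩
      · exact ih u hu h
      · have hx : x = v := by
          rcases hnbr u hu x hax with h | h
          · exact h
          · exact absurd hxA (ih x h)
        have hy : y = v := by
          rcases hnbr u hu y hay with h | h
          · exact h
          · exact absurd hyA (ih y h)
        exact hxy (hx.trans hy.symm)
  obtain ⟨u0, hu0⟩ := c.exists_rep
  have hu0C : (u0 : V) ∈ C := by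
    rw [hC]; exact ⟨u0, hu0, rfl⟩
  obtain ⟨t, ht⟩ := hS
  exact key t u0 hu0C (ht ▸ Set.mem_univ _)
end
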